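/- arXiv:1809.01455 — 4 statements merged into one kernel-verified Lean document; each statement's English description precedes it below -/
import Mathlib

section
/- Let Φ be a strictly isotonic, strongly strictly concave function on positive definite d×d matrices. Let μ, ζ be probability measures on ℝ^d with means a_μ, a_ζ and positive definite covariances Σ_μ, Σ_ζ. If the Burbea-Rao divergence D(μ,ζ) = Φ[(Σ_μ+Σ_ζ)/2 + (a_ζ-a_μ)(a_ζ-a_μ)ᵀ/4] - [Φ(Σ_μ)+Φ(Σ_ζ)]/2 equals zero, then a_μ = a_ζ and Σ_μ = Σ_ζ. -/
/-!
Put `m = (Σ_μ + Σ_ζ)/2` and `M = m + vvᵀ/4` with `v = a_ζ - a_μ`. Since `M - m` is positive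
semidefinite, isotonicity gives `Φ m ≤ Φ M`, and concavity at the midpoint gives
`(Φ Σ_μ + Φ Σ_ζ)/2 ≤ Φ m`. A vanishing divergence says `Φ M = (Φ Σ_μ + Φ Σ_ζ)/2`, so both inequalities
are equalities; strictness then forces `Σ_μ = Σ_ζ` and `M = m`, i.e. `vvᵀ = 0`, i.e. `a_μ = a_ζ`.
-/

open Matrix

variable {n : Type*}

def StrictlyIsotonic (Φ : Matrix n n ℝ → ℝ) : Prop :=
  ∀ M₁ M₂ : Matrix n n ℝ, M₂.PosDef → (M₁ - M₂).PosSemidef → M₁ ≠ M₂ → Φ M₂ < Φ M₁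

def StronglyStrictlyConcave (Φ : Matrix n n ℝ → ℝ) : Prop :=
  ∀ α : ℝ, 0 < α → α < 1 → ∀ M₁ M₂ : Matrix n n ℝ, M₁.PosDef → M₂.PosSemidef → M₂ ≠ 0 →
    M₂ ≠ M₁ → (1 - α) * Φ M₁ + α * Φ M₂ < Φ ((1 - α) • M₁ + α • M₂)

namespace StrictlyIsotonic

variable {Φ : Matrix n n ℝ → ℝ} {A B : Matrix n n ℝ}

theorem le (hΦ : StrictlyIsotonic Φ) (hB : B.PosDef) (hAB : (A - B).PosSemidef) :
    Φ B ≤ Φ A := by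
  rcases eq_or_ne A B with rfl | hne
  · rfl
  · exact (hΦ A B hB hAB hne).le

theorem eq_of_le (hΦ : StrictlyIsotonic Φ) (hB : B.PosDef) (hAB : (A - B).PosSemidef)
    (hle : Φ A ≤ Φ B) : A = B := by
  by_contra hne
  exact (hΦ A B hB hAB hne).not_ge hle

end StrictlyIsotonic

theorem StronglyStrictlyConcave.midpoint_lt [Fintype n] {Φ : Matrix n n ℝ → ℝ} (hΦ : StronglyStrictlyConcave Φ)
    {A B : Matrix n n ℝ} (hA : A.PosDef) (hB : B.PosDef) (hne : A ≠ B) :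
    (Φ A + Φ B) / 2 < Φ ((1 / 2 : ℝ) • (A + B)) := by
  have : Nonempty n := by
    by_contra hn
    rw [not_nonempty_iff] at hn
    exact hne (Subsingleton.elim A B)
  have hB0 : B ≠ 0 := fun h ↦ hB.trace_pos.ne' (by simp [h])
  have hmid : (1 - 1 / 2 : ℝ) • A + (1 / 2 : ℝ) • B = (1 / 2 : ℝ) • (A + B) := by module
  have := hΦ (1 / 2) (by norm_num) (by norm_num) A B hA hB.posSemidef hB0 hne.symm
  rw [hmid] at this
  linarith

/-- If Φ is strictly isotonic and strongly strictly concave on positive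
definite matrices, then the vanishing of the Burbea-Rao divergence between two
distributions with means a_μ, a_ζ and positive definite covariances Σ_μ, Σ_ζ forces
equal means and covariances. -/
theorem burbeaRao_distinguishes
    (d : ℕ) (Φ : Matrix (Fin d) (Fin d) ℝ → ℝ)
    (hiso : ∀ M₁ M₂ : Matrix (Fin d) (Fin d) ℝ, M₂.PosDef → (M₁ - M₂).PosSemidef →
      M₁ ≠ M₂ → Φ M₂ < Φ M₁)
    (hconcave : ∀ (α : ℝ), 0 < α → α < 1 →
      ∀ M₁ M₂ : Matrix (Fin d) (Fin d) ℝ, M₁.PosDef → M₂.PosSemidef → M₂ ≠ 0 →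
        M₂ ≠ M₁ →
        (1 - α) * Φ M₁ + α * Φ M₂ < Φ ((1 - α) • M₁ + α • M₂))
    (aμ aζ : Fin d → ℝ) (Sμ Sζ : Matrix (Fin d) (Fin d) ℝ)
    (hSμ : Sμ.PosDef) (hSζ : Sζ.PosDef)
    (hD : Φ ((1 / 2 : ℝ) • (Sμ + Sζ) + (1 / 4 : ℝ) • vecMulVec (aζ - aμ) (aζ - aμ))
            - (Φ Sμ + Φ Sζ) / 2 = 0) :
    aμ = aζ ∧ Sμ = Sζ := by
  set v := aζ - aμ
  set m : Matrix (Fin d) (Fin d) ℝ := (1 / 2 : ℝ) • (Sμ + Sζ)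
  have hm : m.PosDef := (hSμ.add_posSemidef hSζ.posSemidef).smul (by norm_num)
  have hgap : (m + (1 / 4 : ℝ) • vecMulVec v v - m).PosSemidef := by
    simpa using (posSemidef_vecMulVec_self_star v).smul (by norm_num : (0 : ℝ) ≤ 1 / 4)
  have hmono : Φ m ≤ Φ (m + (1 / 4 : ℝ) • vecMulVec v v) := StrictlyIsotonic.le hiso hm hgap
  have hS : Sμ = Sζ := by
    by_contra hne
    linarith [StronglyStrictlyConcave.midpoint_lt hconcave hSμ hSζ hne]
  have hmS : m = Sμ := by simp only [m, hS]; module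
  have hΦm : Φ m = (Φ Sμ + Φ Sζ) / 2 := by rw [hmS, ← hS]; ring
  have hM : m + (1 / 4 : ℝ) • vecMulVec v v = m :=
    StrictlyIsotonic.eq_of_le hiso hm hgap (by linarith)
  have hv : v = 0 := by simpa using hM
  exact ⟨(sub_eq_zero.mp hv).symm, hS⟩
end

section
/- Let Φ be a strictly isotonic, strongly strictly concave, differentiable function on positive definite d×d matrices. Define the Jeffreys-Bregman divergence of two probability measures μ, ζ with means a_μ, a_ζ and positive definite covariances Σ_μ, Σ_ζ by D(μ,ζ) = ½ tr[(∇Φ(Σ_μ) - ∇Φ(Σ_ζ))(Σ_ζ - Σ_μ)] + ½ (a_ζ - a_μ)ᵀ[∇Φ(Σ_μ) + ∇Φ(Σ_ζ)](a_ζ - a_μ). Then D(μ,ζ) = 0 implies a_μ = a_ζ and Σ_μ = Σ_ζ. -/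
open Matrix

/-!
Perturbing a positive definite `A` by the rank-one matrix `x xᵀ` and comparing strict
isotonicity with the first-order inequality gives `0 < xᵀ ∇Φ(A) x` for `x ≠ 0`. Adding the
first-order inequalities at `Σ_μ` and at `Σ_ζ` makes the trace term of the divergence positive
unless `Σ_μ = Σ_ζ`. Both terms are therefore nonnegative, so each vanishes, which forces equal
covariances and, by positivity of the quadratic form of `∇Φ(Σ_μ) + ∇Φ(Σ_ζ)`, equal means.
-/

section

variable {n : Type*} [Fintype n]
  {Φ : Matrix n n ℝ → ℝ} {grad : Matrix n n ℝ → Matrix n n ℝ}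

theorem trace_mul_vecMulVec_self {R : Type*} [CommSemiring R] (M : Matrix n n R) (x : n → R) :
    (M * vecMulVec x x).trace = x ⬝ᵥ (M *ᵥ x) := by
  rw [mul_vecMulVec, trace_vecMulVec, dotProduct_comm]

theorem dotProduct_grad_mulVec_pos
    (hiso : ∀ M₁ M₂ : Matrix n n ℝ, M₂.PosDef → (M₁ - M₂).PosSemidef → M₁ ≠ M₂ → Φ M₂ < Φ M₁)
    (hgrad : ∀ A B : Matrix n n ℝ, A.PosDef → B.PosDef → A ≠ B →
      Φ B < Φ A + (grad A * (B - A)).trace)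
    {A : Matrix n n ℝ} (hA : A.PosDef) {x : n → ℝ} (hx : x ≠ 0) :
    0 < x ⬝ᵥ (grad A *ᵥ x) := by
  have hxx : (vecMulVec x x).PosSemidef := by
    simpa only [star_trivial] using posSemidef_vecMulVec_self_star x
  have hsub : A + vecMulVec x x - A = vecMulVec x x := add_sub_cancel_left A _
  have hne : A + vecMulVec x x ≠ A := by
    simpa only [ne_eq, add_eq_left] using vecMulVec_ne_zero hx hx
  have hup := hiso _ A hA (by rwa [hsub]) hne
  have hfirst := hgrad A _ hA (hA.add_posSemidef hxx) hne.symm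
  rw [hsub, trace_mul_vecMulVec_self] at hfirst
  linarith

theorem trace_grad_sub_mul_sub_pos
    (hgrad : ∀ A B : Matrix n n ℝ, A.PosDef → B.PosDef → A ≠ B →
      Φ B < Φ A + (grad A * (B - A)).trace)
    {A B : Matrix n n ℝ} (hA : A.PosDef) (hB : B.PosDef) (hAB : A ≠ B) :
    0 < ((grad A - grad B) * (B - A)).trace := by
  have hsplit : ((grad A - grad B) * (B - A)).trace =
      (grad A * (B - A)).trace + (grad B * (A - B)).trace := by
    rw [← neg_sub B A, mul_neg, trace_neg, sub_mul, trace_sub]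
    ring
  have hfirstA := hgrad A B hA hB hAB
  have hfirstB := hgrad B A hB hA hAB.symm
  linarith

end

theorem jeffreysBregman_distinguishes_general
    (d : ℕ) (Φ : Matrix (Fin d) (Fin d) ℝ → ℝ)
    (grad : Matrix (Fin d) (Fin d) ℝ → Matrix (Fin d) (Fin d) ℝ)
    (hiso : ∀ M₁ M₂ : Matrix (Fin d) (Fin d) ℝ, M₂.PosDef → (M₁ - M₂).PosSemidef →
      M₁ ≠ M₂ → Φ M₂ < Φ M₁)
    (hgrad : ∀ A B : Matrix (Fin d) (Fin d) ℝ, A.PosDef → B.PosDef → A ≠ B →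
      Φ B < Φ A + (grad A * (B - A)).trace)
    (aμ aζ : Fin d → ℝ) (Sμ Sζ : Matrix (Fin d) (Fin d) ℝ)
    (hSμ : Sμ.PosDef) (hSζ : Sζ.PosDef)
    (hD : (1 / 2 : ℝ) * ((grad Sμ - grad Sζ) * (Sζ - Sμ)).trace
        + (1 / 2 : ℝ) * ((aζ - aμ) ⬝ᵥ ((grad Sμ + grad Sζ) *ᵥ (aζ - aμ))) = 0) :
    aμ = aζ ∧ Sμ = Sζ := by
  have hquad : ∀ x ≠ 0, 0 < x ⬝ᵥ ((grad Sμ + grad Sζ) *ᵥ x) := fun x hx => by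
    rw [add_mulVec, dotProduct_add]
    exact add_pos (dotProduct_grad_mulVec_pos hiso hgrad hSμ hx)
      (dotProduct_grad_mulVec_pos hiso hgrad hSζ hx)
  have htrace := trace_grad_sub_mul_sub_pos hgrad hSμ hSζ
  have htrace_nonneg : 0 ≤ ((grad Sμ - grad Sζ) * (Sζ - Sμ)).trace := by
    rcases eq_or_ne Sμ Sζ with h | h
    · simp [h]
    · exact (htrace h).le
  have hquad_nonneg : 0 ≤ (aζ - aμ) ⬝ᵥ ((grad Sμ + grad Sζ) *ᵥ (aζ - aμ)) := by
    rcases eq_or_ne (aζ - aμ) 0 with h | h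
    · simp [h]
    · exact (hquad _ h).le
  constructor
  · by_contra h
    have := hquad _ (sub_ne_zero.mpr (Ne.symm h))
    linarith
  · by_contra h
    have := htrace h
    linarith

/-- If Φ is strictly isotonic, strongly strictly concave and differentiable
on positive definite matrices (gradients symmetric, satisfying the strict first-order
inequality), then vanishing of the Jeffreys-Bregman divergence forces equal means and
covariances. -/
theorem jeffreysBregman_distinguishes
    (d : ℕ) (Φ : Matrix (Fin d) (Fin d) ℝ → ℝ)
    (grad : Matrix (Fin d) (Fin d) ℝ → Matrix (Fin d) (Fin d) ℝ)
    (hsymm : ∀ M : Matrix (Fin d) (Fin d) ℝ, M.PosDef → (grad M).IsSymm)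
    (hiso : ∀ M₁ M₂ : Matrix (Fin d) (Fin d) ℝ, M₂.PosDef → (M₁ - M₂).PosSemidef →
      M₁ ≠ M₂ → Φ M₂ < Φ M₁)
    (hgrad : ∀ A B : Matrix (Fin d) (Fin d) ℝ, A.PosDef → B.PosDef → A ≠ B →
      Φ B < Φ A + (grad A * (B - A)).trace)
    (aμ aζ : Fin d → ℝ) (Sμ Sζ : Matrix (Fin d) (Fin d) ℝ)
    (hSμ : Sμ.PosDef) (hSζ : Sζ.PosDef)
    (hD : (1 / 2 : ℝ) * ((grad Sμ - grad Sζ) * (Sζ - Sμ)).trace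
        + (1 / 2 : ℝ) * ((aζ - aμ) ⬝ᵥ ((grad Sμ + grad Sζ) *ᵥ (aζ - aμ))) = 0) :
    aμ = aζ ∧ Sμ = Sζ :=
  jeffreysBregman_distinguishes_general d Φ grad hiso hgrad aμ aζ Sμ Sζ hSμ hSζ hD
end

section
/- For d×d positive definite matrices and 0 < p < 1, Kiefer's criterion φ_p(M) = [(1/d) tr(M^p)]^{1/p} is strictly isotonic: if M₁ - M₂ is positive semidefinite, M₂ positive definite, and M₁ ≠ M₂, then φ_p(M₁) > φ_p(M₂). -/
open Matrix

/-- Kiefer's φ_p criterion on symmetric matrices, defined spectrally: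
tr(M^p) = ∑ λᵢ(M)^p. -/
noncomputable def kieferPhi {d : ℕ} (p : ℝ) (M : Matrix (Fin d) (Fin d) ℝ)
    (hM : M.IsHermitian) : ℝ :=
  ((1 / (d : ℝ)) * ∑ i, hM.eigenvalues i ^ p) ^ ((1 : ℝ) / p)

/-!
Diagonalise `M₁ = U diag(λ) Uᵀ` and `M₂ = W diag(μ) Wᵀ`, and put `C = Uᵀ M₂ U`. The diagonal of
`C` is `μ` averaged by the doubly stochastic matrix `((UᵀW)ᵢⱼ²)`, so concavity of `t ↦ t ^ p` gives
`∑ μⱼ ^ p ≤ ∑ Cᵢᵢ ^ p`. As `Uᵀ (M₁ - M₂) U = diag(λ) - C` is positive semidefinite and nonzero,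
`Cᵢᵢ ≤ λᵢ` for all `i`, strictly for some `i` because its trace is positive; hence
`∑ Cᵢᵢ ^ p < ∑ λᵢ ^ p`.
-/

namespace Matrix

variable {n : Type*} [Fintype n]

open scoped ComplexOrder in
lemma PosSemidef.trace_pos {𝕜 : Type*} [RCLike 𝕜] {A : Matrix n n 𝕜} (hA : A.PosSemidef)
    (hA0 : A ≠ 0) : 0 < A.trace :=
  hA.trace_nonneg.lt_of_ne (Ne.symm (hA.trace_eq_zero_iff.not.mpr hA0))

variable [DecidableEq n]

lemma sum_sq_apply_left_eq_one_of_mem_unitaryGroup {W : Matrix n n ℝ}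
    (hW : W ∈ unitaryGroup n ℝ) (i : n) : ∑ j, W i j ^ 2 = 1 := by
  simpa [mul_apply, one_apply, sq] using congrFun₂ (mem_unitaryGroup_iff.mp hW) i i

lemma sum_sq_apply_right_eq_one_of_mem_unitaryGroup {W : Matrix n n ℝ}
    (hW : W ∈ unitaryGroup n ℝ) (j : n) : ∑ i, W i j ^ 2 = 1 := by
  simpa [mul_apply, one_apply, sq] using congrFun₂ (mem_unitaryGroup_iff'.mp hW) j j

lemma mul_diagonal_mul_star_apply_self (W : Matrix n n ℝ) (μ : n → ℝ) (i : n) :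
    (W * diagonal μ * star W) i i = ∑ j, W i j ^ 2 * μ j := by
  rw [mul_apply]
  simp only [mul_diagonal, star_apply, star_trivial]
  exact Finset.sum_congr rfl fun j _ => by ring

theorem sum_map_le_sum_map_diag_mul_diagonal_mul_star {W : Matrix n n ℝ}
    (hW : W ∈ unitaryGroup n ℝ) {μ : n → ℝ} {s : Set ℝ} {f : ℝ → ℝ} (hf : ConcaveOn ℝ s f)
    (hμ : ∀ j, μ j ∈ s) :
    ∑ j, f (μ j) ≤ ∑ i, f ((W * diagonal μ * star W) i i) := calc
  ∑ j, f (μ j) = ∑ i, ∑ j, W i j ^ 2 * f (μ j) := by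
    rw [Finset.sum_comm]
    simp only [← Finset.sum_mul, sum_sq_apply_right_eq_one_of_mem_unitaryGroup hW, one_mul]
  _ ≤ ∑ i, f (∑ j, W i j ^ 2 * μ j) := Finset.sum_le_sum fun i _ =>
    hf.le_map_sum (fun j _ => sq_nonneg _) (sum_sq_apply_left_eq_one_of_mem_unitaryGroup hW i)
      (fun j _ => hμ j)
  _ = ∑ i, f ((W * diagonal μ * star W) i i) := by
    simp only [mul_diagonal_mul_star_apply_self]

namespace IsHermitian

variable {A : Matrix n n ℝ} (hA : A.IsHermitian)

lemma eq_eigenvectorUnitary_mul_diagonal_mul_star :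
    A = hA.eigenvectorUnitary * diagonal hA.eigenvalues *
      star (hA.eigenvectorUnitary : Matrix n n ℝ) := by
  simpa [Unitary.conjStarAlgAut_apply, RCLike.ofReal_real_eq_id] using hA.spectral_theorem

lemma star_eigenvectorUnitary_mul_mul_eigenvectorUnitary :
    star (hA.eigenvectorUnitary : Matrix n n ℝ) * A * hA.eigenvectorUnitary =
      diagonal hA.eigenvalues := by
  simpa [Unitary.conjStarAlgAut_apply, RCLike.ofReal_real_eq_id] using
    hA.conjStarAlgAut_star_eigenvectorUnitary

end IsHermitian

theorem sum_map_eigenvalues_lt_of_posSemidef_sub {A B : Matrix n n ℝ} (hA : A.IsHermitian)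
    (hB : B.PosSemidef) (hAB : (A - B).PosSemidef) (hne : A ≠ B) {f : ℝ → ℝ}
    (hf_concave : ConcaveOn ℝ (Set.Ici 0) f) (hf_mono : StrictMonoOn f (Set.Ici 0)) :
    ∑ j, f (hB.1.eigenvalues j) < ∑ i, f (hA.eigenvalues i) := by
  set U : Matrix n n ℝ := (hA.eigenvectorUnitary : Matrix n n ℝ)
  set W : Matrix n n ℝ := (hB.1.eigenvectorUnitary : Matrix n n ℝ)
  set C := star U * B * U with hC_def
  have hV : star U * W ∈ unitaryGroup n ℝ :=
    mul_mem (Unitary.star_mem hA.eigenvectorUnitary.2) hB.1.eigenvectorUnitary.2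
  have hC : C = (star U * W) * diagonal hB.1.eigenvalues * star (star U * W) := by
    rw [hC_def, star_mul, star_star]
    conv_lhs => rw [hB.1.eq_eigenvectorUnitary_mul_diagonal_mul_star]
    simp only [mul_assoc]
    rfl
  have hC_nonneg : ∀ i, 0 ≤ C i i := fun i => (hB.conjTranspose_mul_mul_same U).diag_nonneg
  have hdiff : star U * (A - B) * U = diagonal hA.eigenvalues - C := by
    rw [mul_sub, sub_mul, hA.star_eigenvectorUnitary_mul_mul_eigenvectorUnitary]
  have hdiff_psd : (star U * (A - B) * U).PosSemidef := hAB.conjTranspose_mul_mul_same U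
  have hC_le : ∀ i, C i i ≤ hA.eigenvalues i := fun i => by
    have := hdiff_psd.diag_nonneg (i := i)
    rwa [hdiff, sub_apply, diagonal_apply_eq, sub_nonneg] at this
  have htrace : ∑ i, C i i < ∑ i, hA.eigenvalues i := by
    have hpos : 0 < (star U * (A - B) * U).trace := by
      rw [trace_mul_cycle, Unitary.mul_star_self_of_mem hA.eigenvectorUnitary.2, one_mul]
      exact hAB.trace_pos (sub_ne_zero.mpr hne)
    simpa [hdiff, trace] using hpos
  obtain ⟨i₀, -, hi₀⟩ := Finset.exists_lt_of_sum_lt htrace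
  calc ∑ j, f (hB.1.eigenvalues j)
      ≤ ∑ i, f (C i i) := by
        rw [hC]
        exact sum_map_le_sum_map_diag_mul_diagonal_mul_star hV hf_concave hB.eigenvalues_nonneg
    _ < ∑ i, f (hA.eigenvalues i) :=
        Finset.sum_lt_sum
          (fun i _ => hf_mono.monotoneOn (hC_nonneg i) ((hC_nonneg i).trans (hC_le i)) (hC_le i))
          ⟨i₀, Finset.mem_univ _, hf_mono (hC_nonneg i₀) ((hC_nonneg i₀).trans (hC_le i₀)) hi₀⟩

end Matrix

theorem kieferPhi_strictly_isotonic_general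
    (d : ℕ) (p : ℝ) (hp0 : 0 < p) (hp1 : p < 1)
    (M₁ M₂ : Matrix (Fin d) (Fin d) ℝ)
    (hM₁ : M₁.IsHermitian) (hM₂ : M₂.PosDef)
    (hle : (M₁ - M₂).PosSemidef) (hne : M₁ ≠ M₂) :
    kieferPhi p M₂ hM₂.1 < kieferPhi p M₁ hM₁ := by
  have hd : 0 < d := Nat.pos_of_ne_zero <| by
    rintro rfl
    exact hne (Subsingleton.elim _ _)
  have htrace : ∑ j, hM₂.1.eigenvalues j ^ p < ∑ i, hM₁.eigenvalues i ^ p :=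
    sum_map_eigenvalues_lt_of_posSemidef_sub hM₁ hM₂.posSemidef hle hne
      (Real.concaveOn_rpow hp0.le hp1.le) (Real.strictMonoOn_rpow_Ici_of_exponent_pos hp0)
  unfold kieferPhi
  gcongr
  exact mul_nonneg (by positivity)
    (Finset.sum_nonneg fun j _ => Real.rpow_nonneg (hM₂.eigenvalues_pos j).le p)

/-- For 0 < p < 1, φ_p is strictly isotonic: M₁ ⪰ M₂ ≻ 0 and M₁ ≠ M₂
imply φ_p(M₁) > φ_p(M₂). -/
theorem kieferPhi_strictly_isotonic
    (d : ℕ) (hd : 0 < d) (p : ℝ) (hp0 : 0 < p) (hp1 : p < 1)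
    (M₁ M₂ : Matrix (Fin d) (Fin d) ℝ)
    (hM₁ : M₁.IsHermitian) (hM₂ : M₂.PosDef)
    (hle : (M₁ - M₂).PosSemidef) (hne : M₁ ≠ M₂) :
    kieferPhi p M₂ hM₂.1 < kieferPhi p M₁ hM₁ :=
  kieferPhi_strictly_isotonic_general d p hp0 hp1 M₁ M₂ hM₁ hM₂ hle hne
end

section
/- For p ∈ (0,1) and positive definite d×d matrices Σ_μ and Σ_ζ, the quantity ½[tr(Σ_μ^{p-1}Σ_ζ)/tr(Σ_μ^p) + tr(Σ_ζ^{p-1}Σ_μ)/tr(Σ_ζ^p)] - 1 is nonnegative, and it is zero when Σ_ζ = Σ_μ. -/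
/-!
Write `A = U diag(α) Uᴴ` and `B = V diag(β) Vᴴ` and put `W = Uᴴ V`. The squares `W i j ^ 2` form a
doubly stochastic matrix, and `tr (A ^ q * B ^ r) = ∑ i j, W i j ^ 2 * α i ^ q * β j ^ r`.
Averaging the tangent-line bound `β ^ p ≤ (1 - p) α ^ p + p α ^ (p - 1) β` of the concave
function `t ↦ t ^ p` with these weights gives Klein's inequality
`tr B ^ p ≤ (1 - p) tr A ^ p + p tr (A ^ (p - 1) B)`, and likewise with `A` and `B` swapped.
Dividing by `a = tr A ^ p` and `b = tr B ^ p` and adding, the two ratios sum to at least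
`(a / b + b / a - 2 (1 - p)) / p ≥ 2`.
-/

open Matrix

/-- The real power M^p of a symmetric matrix, defined through the spectral
decomposition. -/
noncomputable def matRpow {d : ℕ} (M : Matrix (Fin d) (Fin d) ℝ)
    (hM : M.IsHermitian) (p : ℝ) : Matrix (Fin d) (Fin d) ℝ :=
  (hM.eigenvectorUnitary : Matrix (Fin d) (Fin d) ℝ) *
    Matrix.diagonal (fun i => hM.eigenvalues i ^ p) *
    star (hM.eigenvectorUnitary : Matrix (Fin d) (Fin d) ℝ)

theorem Real.rpow_le_tangent {x y p : ℝ} (hx : 0 < x) (hy : 0 ≤ y) (hp0 : 0 ≤ p) (hp1 : p ≤ 1) :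
    y ^ p ≤ (1 - p) * x ^ p + p * (x ^ (p - 1) * y) := by
  have hamgm : y ^ p * x ^ (1 - p) ≤ p * y + (1 - p) * x :=
    Real.geom_mean_le_arith_mean2_weighted hp0 (by linarith) hy hx.le (by ring)
  have hcancel : x ^ (1 - p) * x ^ (p - 1) = 1 := by
    rw [← Real.rpow_add hx, sub_add_sub_cancel', sub_self, Real.rpow_zero]
  have hx_mul : x * x ^ (p - 1) = x ^ p := by
    rw [mul_comm, ← Real.rpow_add_one hx.ne', sub_add_cancel]
  calc y ^ p = y ^ p * x ^ (1 - p) * x ^ (p - 1) := by rw [mul_assoc, hcancel, mul_one]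
    _ ≤ (p * y + (1 - p) * x) * x ^ (p - 1) :=
        mul_le_mul_of_nonneg_right hamgm (by positivity)
    _ = (1 - p) * x ^ p + p * (x ^ (p - 1) * y) := by rw [← hx_mul]; ring

theorem Matrix.UnitaryGroup.sum_sq_apply_row {n : Type*} [Fintype n] [DecidableEq n]
    (W : unitaryGroup n ℝ) (i : n) : ∑ j, (W : Matrix n n ℝ) i j ^ 2 = 1 := by
  have h := congr_fun₂ (mem_unitaryGroup_iff.mp W.2) i i
  rw [Matrix.mul_apply, one_apply_eq] at h
  simpa only [star_apply, star_trivial, sq] using h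

theorem Matrix.UnitaryGroup.sum_sq_apply_col {n : Type*} [Fintype n] [DecidableEq n]
    (W : unitaryGroup n ℝ) (j : n) : ∑ i, (W : Matrix n n ℝ) i j ^ 2 = 1 := by
  have h := congr_fun₂ (mem_unitaryGroup_iff'.mp W.2) j j
  rw [Matrix.mul_apply, one_apply_eq] at h
  simpa only [star_apply, star_trivial, sq] using h

theorem Matrix.trace_diagonal_mul_mul_diagonal_mul_star {n : Type*} [Fintype n] [DecidableEq n]
    (f g : n → ℝ) (W : Matrix n n ℝ) :
    (diagonal f * W * diagonal g * star W).trace = ∑ i, ∑ j, W i j ^ 2 * (f i * g j) := by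
  refine Finset.sum_congr rfl fun i _ => ?_
  rw [diag_apply, Matrix.mul_apply]
  refine Finset.sum_congr rfl fun j _ => ?_
  rw [mul_diagonal, diagonal_mul, star_apply, star_trivial]
  ring

theorem two_le_div_add_div_of_le {a b s t p : ℝ} (ha : 0 < a) (hb : 0 < b) (hp : 0 < p)
    (hs : b ≤ (1 - p) * a + p * s) (ht : a ≤ (1 - p) * b + p * t) : 2 ≤ s / a + t / b := by
  have hp_mul : p * (2 * (a * b)) ≤ p * (s * b + t * a) := by
    nlinarith [mul_le_mul_of_nonneg_right hs hb.le, mul_le_mul_of_nonneg_right ht ha.le,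
      sq_nonneg (a - b)]
  rw [div_add_div _ _ ha.ne' hb.ne', le_div_iff₀ (mul_pos ha hb)]
  linarith [le_of_mul_le_mul_left hp_mul hp]

section matRpow

variable {d : ℕ} {A B : Matrix (Fin d) (Fin d) ℝ}

theorem matRpow_one (hA : A.IsHermitian) : matRpow A hA 1 = A := by
  conv_rhs => rw [hA.spectral_theorem, Unitary.conjStarAlgAut_apply]
  simp only [matRpow, Real.rpow_one]
  rfl

theorem matRpow_mul_matRpow (hA : A.PosDef) (q r : ℝ) :
    matRpow A hA.1 q * matRpow A hA.1 r = matRpow A hA.1 (q + r) := by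
  have hdiag : diagonal (fun i => hA.1.eigenvalues i ^ q) *
      diagonal (fun i => hA.1.eigenvalues i ^ r) = diagonal (fun i => hA.1.eigenvalues i ^ (q + r)) := by
    rw [diagonal_mul_diagonal]
    congr 1
    funext i
    rw [Real.rpow_add (hA.eigenvalues_pos i)]
  simp only [matRpow, ← hdiag, Matrix.mul_assoc]
  rw [← Matrix.mul_assoc (star _) _ (_ * _), Unitary.coe_star_mul_self, Matrix.one_mul]

theorem matRpow_sub_one_mul_self (hA : A.PosDef) (p : ℝ) :
    matRpow A hA.1 (p - 1) * A = matRpow A hA.1 p := by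
  have h := matRpow_mul_matRpow hA (p - 1) 1
  rwa [matRpow_one, sub_add_cancel] at h

theorem trace_matRpow (hA : A.IsHermitian) (q : ℝ) :
    (matRpow A hA q).trace = ∑ i, hA.eigenvalues i ^ q := by
  rw [matRpow, trace_mul_cycle, Unitary.coe_star_mul_self, one_mul, trace_diagonal]

theorem trace_matRpow_pos [Nonempty (Fin d)] (hA : A.PosDef) (q : ℝ) :
    0 < (matRpow A hA.1 q).trace := by
  rw [trace_matRpow]
  exact Finset.sum_pos (fun i _ => Real.rpow_pos_of_pos (hA.eigenvalues_pos i) q)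
    Finset.univ_nonempty

noncomputable def eigenbasisChange (hA : A.IsHermitian) (hB : B.IsHermitian) :
    unitaryGroup (Fin d) ℝ :=
  star hA.eigenvectorUnitary * hB.eigenvectorUnitary

theorem trace_matRpow_mul_matRpow (hA : A.IsHermitian) (hB : B.IsHermitian) (q r : ℝ) :
    (matRpow A hA q * matRpow B hB r).trace =
      ∑ i, ∑ j, (eigenbasisChange hA hB : Matrix (Fin d) (Fin d) ℝ) i j ^ 2 *
        (hA.eigenvalues i ^ q * hB.eigenvalues j ^ r) := by
  rw [← trace_diagonal_mul_mul_diagonal_mul_star, matRpow, Matrix.mul_assoc _ _ (star _),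
    Matrix.mul_assoc, trace_mul_comm]
  simp only [matRpow, eigenbasisChange, Matrix.mul_assoc, Submonoid.coe_mul, Unitary.coe_star,
    star_mul, star_star]

theorem trace_matRpow_le (hA : A.PosDef) (hB : B.PosDef) {p : ℝ} (hp0 : 0 ≤ p) (hp1 : p ≤ 1) :
    (matRpow B hB.1 p).trace ≤
      (1 - p) * (matRpow A hA.1 p).trace + p * (matRpow A hA.1 (p - 1) * B).trace := by
  set W : Matrix (Fin d) (Fin d) ℝ := ↑(eigenbasisChange hA.1 hB.1)
  set α := hA.1.eigenvalues
  set β := hB.1.eigenvalues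
  have hrow : ∀ i, ∑ j, W i j ^ 2 = 1 := UnitaryGroup.sum_sq_apply_row _
  have hcol : ∀ j, ∑ i, W i j ^ 2 = 1 := UnitaryGroup.sum_sq_apply_col _
  have hcross := trace_matRpow_mul_matRpow hA.1 hB.1 (p - 1) 1
  simp only [matRpow_one, Real.rpow_one] at hcross
  rw [hcross, trace_matRpow, trace_matRpow]
  calc ∑ j, β j ^ p = ∑ i, ∑ j, W i j ^ 2 * β j ^ p := by
        rw [Finset.sum_comm]
        simp only [← Finset.sum_mul, hcol, one_mul]
    _ ≤ ∑ i, ∑ j, W i j ^ 2 * ((1 - p) * α i ^ p + p * (α i ^ (p - 1) * β j)) := by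
        gcongr with i _ j _
        exact Real.rpow_le_tangent (hA.eigenvalues_pos i) (hB.eigenvalues_pos j).le hp0 hp1
    _ = (1 - p) * ∑ i, α i ^ p + p * ∑ i, ∑ j, W i j ^ 2 * (α i ^ (p - 1) * β j) := by
        simp only [mul_add, Finset.sum_add_distrib, Finset.mul_sum]
        congr 1
        · exact Finset.sum_congr rfl fun i _ => by rw [← Finset.sum_mul, hrow, one_mul]
        · exact Finset.sum_congr rfl fun i _ => Finset.sum_congr rfl fun j _ => by ring

end matRpow

/-- For p ∈ (0,1) and positive definite Σ_μ, Σ_ζ, the Jeffreys-Bregman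
divergence ½[tr(Σ_μ^{p-1}Σ_ζ)/tr(Σ_μ^p) + tr(Σ_ζ^{p-1}Σ_μ)/tr(Σ_ζ^p)] − 1 is
nonnegative, and zero when Σ_ζ = Σ_μ. -/
theorem jeffreysBregman_logPhip_nonneg
    (d : ℕ) (hd : 0 < d) (p : ℝ) (hp0 : 0 < p) (hp1 : p < 1)
    (Sμ Sζ : Matrix (Fin d) (Fin d) ℝ) (hSμ : Sμ.PosDef) (hSζ : Sζ.PosDef) :
    0 ≤ (1 / 2 : ℝ) * ((matRpow Sμ hSμ.1 (p - 1) * Sζ).trace / (matRpow Sμ hSμ.1 p).trace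
          + (matRpow Sζ hSζ.1 (p - 1) * Sμ).trace / (matRpow Sζ hSζ.1 p).trace) - 1 ∧
    (Sζ = Sμ →
      (1 / 2 : ℝ) * ((matRpow Sμ hSμ.1 (p - 1) * Sζ).trace / (matRpow Sμ hSμ.1 p).trace
          + (matRpow Sζ hSζ.1 (p - 1) * Sμ).trace / (matRpow Sζ hSζ.1 p).trace) - 1 = 0) := by
  have : Nonempty (Fin d) := Fin.pos_iff_nonempty.mp hd
  constructor
  · have := two_le_div_add_div_of_le (trace_matRpow_pos hSμ p) (trace_matRpow_pos hSζ p) hp0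
      (trace_matRpow_le hSμ hSζ hp0.le hp1.le) (trace_matRpow_le hSζ hSμ hp0.le hp1.le)
    linarith
  · rintro rfl
    rw [matRpow_sub_one_mul_self hSμ, div_self (trace_matRpow_pos hSμ p).ne']
    norm_num
end
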